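/- arXiv:1204.5657 — 4 statements merged into one kernel-verified Lean document; each statement's English description precedes it below -/
import Mathlib

section
/- Let π: M̃ → M = M̃/Γ be a semi-Riemannian covering by a connected manifold M̃ with Γ properly discontinuous isometries, p ∈ M, p̃ ∈ π^{-1}(p). Then the map Φ: Γ → Hol_p(M)/ι(Hol_{p̃}(M̃)), sending σ to the class of P_γ where γ is a loop at p whose lift starting at p̃ ends at σ^{-1}(p̃), is a well-defined surjective group homomorphism. -/
/-!
The coset of `P_{π∘γ}` modulo `ι(Hol_{p̃}(M̃))` does not depend on the lift: for two lifts `γ, δ`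
from `p̃` to `q = σ⁻¹ p̃`, the loop `γ⁻¹ δ` at `q` is carried by `σ` to a loop at `p̃` with the
same projection, hence the same transport. Multiplicativity follows by concatenating `γ₂` with
`σ₂⁻¹ γ₁`, which projects to the same loop as `γ₁`, and surjectivity from path lifting together
with transitivity of `Γ` on the fibres.
-/

/-- An abstract system of parallel transports along paths in `M`, acting on a vector
space `V` (the tangent space in a fixed trivialization). -/
structure TransportSystem (M : Type) [TopologicalSpace M]
    (V : Type) [AddCommGroup V] [Module ℝ V] where
  P : ∀ {x y : M}, Path x y → (V ≃ₗ[ℝ] V)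
  P_refl : ∀ x : M, P (Path.refl x) = LinearEquiv.refl ℝ V
  P_trans : ∀ {x y z : M} (γ : Path x y) (δ : Path y z),
    P (γ.trans δ) = (P γ).trans (P δ)
  P_symm : ∀ {x y : M} (γ : Path x y), P γ.symm = (P γ).symm

namespace TransportSystem

variable {M V : Type} [TopologicalSpace M] [AddCommGroup V] [Module ℝ V] (S : TransportSystem M V)

theorem P_congr {x y x' y' : M} (γ : Path x y) (δ : Path x' y') (h : ⇑γ = ⇑δ) :
    S.P γ = S.P δ := by
  obtain rfl : x = x' := by simpa using congrFun h 0
  obtain rfl : y = y' := by simpa using congrFun h 1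
  rw [Path.ext h]

theorem P_symm_trans {x y z : M} (γ : Path x y) (δ : Path x z) :
    S.P (γ.symm.trans δ) = S.P δ * (S.P γ)⁻¹ := by
  rw [S.P_trans, S.P_symm]
  rfl

variable {X : Type} [TopologicalSpace X] {f : X → M} (hf : Continuous f)

/-- The image in `Hol_{f p}(M)` of the holonomy group at `p` of the covering space. -/
def projectedHolonomy (p : X) : Set (V ≃ₗ[ℝ] V) :=
  {g | ∃ γ : Path p p, g = S.P (γ.map hf)}

theorem P_map_mul_inv_mem_projectedHolonomy {p q : X} (γ δ : Path p q) :
    S.P (δ.map hf) * (S.P (γ.map hf))⁻¹ ∈ S.projectedHolonomy hf q :=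
  ⟨γ.symm.trans δ, by rw [Path.map_trans, ← Path.map_symm, P_symm_trans]⟩

theorem P_map_map_of_comp_eq {φ : X → X} (hφ : Continuous φ) (hfφ : ∀ x, f (φ x) = f x)
    {x y : X} (γ : Path x y) : S.P ((γ.map hφ).map hf) = S.P (γ.map hf) :=
  S.P_congr _ _ (funext fun t => hfφ (γ t))

theorem projectedHolonomy_subset_of_comp_eq {φ : X → X} (hφ : Continuous φ)
    (hfφ : ∀ x, f (φ x) = f x) {p q : X} (hq : φ q = p) :
    S.projectedHolonomy hf q ⊆ S.projectedHolonomy hf p := by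
  rintro _ ⟨ℓ, rfl⟩
  exact ⟨(ℓ.map hφ).cast hq.symm hq.symm,
    (S.P_map_map_of_comp_eq hf hφ hfφ ℓ).symm.trans (S.P_congr _ _ rfl)⟩

end TransportSystem

theorem IsCoveringMap.exists_path_lift {E X : Type} [TopologicalSpace E] [TopologicalSpace X]
    {f : E → X} (hf : IsCoveringMap f) (e : E) {y : X} (δ : Path (f e) y) :
    ∃ (e' : E) (γ : Path e e'), ∀ t, f (γ t) = δ t :=
  ⟨hf.liftPath δ e δ.source 1,
    ⟨hf.liftPath δ e δ.source, hf.liftPath_zero .., rfl⟩,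
    fun t => congrFun (hf.liftPath_lifts δ e δ.source) t⟩

theorem holonomy_covering_deck_surjective_general
    (Mt M : Type) [TopologicalSpace Mt] [TopologicalSpace M]
    (V : Type) [AddCommGroup V] [Module ℝ V]
    (S : TransportSystem M V)
    (π : Mt → M) (hπ : Continuous π) (hcov : IsCoveringMap π)
    -- the deck transformation group Γ, acting by isometries with π ∘ σ = π,
    -- transitively on fibers:
    (Γ : Type) [Group Γ] [MulAction Γ Mt]
    (hcont : ∀ σ : Γ, Continuous fun x : Mt => σ • x)
    (hfib : ∀ (σ : Γ) (x : Mt), π (σ • x) = π x)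
    (htrans : ∀ x y : Mt, π x = π y → ∃ σ : Γ, σ • x = y)
    (pt : Mt) :
    -- `ιIm` is the image of `Hol_{pt}(M̃)` in `Hol_p(M)`:
    ∀ ιIm : Set (V ≃ₗ[ℝ] V),
      ιIm = {g | ∃ γ : Path pt pt, g = S.P (γ.map hπ)} →
      -- Φ is well defined: two loops at p whose lifts end at σ⁻¹ • pt give the same coset
      ((∀ (σ : Γ) (γ δ : Path pt (σ⁻¹ • pt)),
          S.P (δ.map hπ) * (S.P (γ.map hπ))⁻¹ ∈ ιIm) ∧
      -- Φ is a group homomorphism: Φ(σ₁)·Φ(σ₂) = Φ(σ₁σ₂)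
      (∀ (σ₁ σ₂ : Γ) (γ₁ : Path pt (σ₁⁻¹ • pt)) (γ₂ : Path pt (σ₂⁻¹ • pt))
          (γ : Path pt ((σ₁ * σ₂)⁻¹ • pt)),
          S.P (γ.map hπ) * ((S.P (γ₂.map hπ)).trans (S.P (γ₁.map hπ)))⁻¹ ∈ ιIm) ∧
      -- Φ is surjective: every loop at p is a representative of some Φ(σ)
      (∀ δ : Path (π pt) (π pt), ∃ (σ : Γ) (γ : Path pt (σ⁻¹ • pt)),
          ∀ t : unitInterval, π (γ t) = δ t)) := by
  rintro _ rfl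
  have hsub (σ : Γ) : S.projectedHolonomy hπ (σ⁻¹ • pt) ⊆ S.projectedHolonomy hπ pt :=
    S.projectedHolonomy_subset_of_comp_eq hπ (hcont σ) (hfib σ) (smul_inv_smul σ pt)
  refine ⟨fun σ γ δ => hsub σ (S.P_map_mul_inv_mem_projectedHolonomy hπ γ δ), ?_, ?_⟩
  · intro σ₁ σ₂ γ₁ γ₂ γ
    have hend : (σ₁ * σ₂)⁻¹ • pt = σ₂⁻¹ • σ₁⁻¹ • pt := by rw [mul_inv_rev, mul_smul]
    let η := γ₂.trans (γ₁.map (hcont σ₂⁻¹))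
    have hη : S.P ((η.cast rfl hend).map hπ) = (S.P (γ₂.map hπ)).trans (S.P (γ₁.map hπ)) := by
      rw [S.P_congr ((η.cast rfl hend).map hπ) (η.map hπ) rfl, Path.map_trans, S.P_trans,
        S.P_map_map_of_comp_eq hπ (hcont _) (hfib _)]
    have h := hsub _ (S.P_map_mul_inv_mem_projectedHolonomy hπ (η.cast rfl hend) γ)
    rwa [hη] at h
  · intro δ
    obtain ⟨q, γ, hγ⟩ := hcov.exists_path_lift pt δ
    obtain ⟨σ, hσ⟩ := htrans q pt (by rw [← γ.target, hγ, δ.target])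
    obtain rfl : q = σ⁻¹ • pt := by rw [← hσ, inv_smul_smul]
    exact ⟨σ, γ, hγ⟩

/-- `Φ : Γ → Hol_p(M)/ι(Hol_{pt}(M̃))` is a well-defined surjective
group homomorphism. -/
theorem holonomy_covering_deck_surjective
    (Mt M : Type) [TopologicalSpace Mt] [TopologicalSpace M] [PathConnectedSpace Mt]
    (Vt V : Type) [AddCommGroup Vt] [Module ℝ Vt] [AddCommGroup V] [Module ℝ V]
    (St : TransportSystem Mt Vt) (S : TransportSystem M V)
    (π : Mt → M) (hπ : Continuous π) (hcov : IsCoveringMap π)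
    (dπ : ∀ _ : Mt, Vt ≃ₗ[ℝ] V)
    (hcompat : ∀ (x y : Mt) (γ : Path x y) (v : Vt),
      S.P (γ.map hπ) (dπ x v) = dπ y (St.P γ v))
    -- the deck transformation group Γ, acting by isometries with π ∘ σ = π,
    -- transitively on fibers:
    (Γ : Type) [Group Γ] [MulAction Γ Mt]
    (hcont : ∀ σ : Γ, Continuous fun x : Mt => σ • x)
    (hfib : ∀ (σ : Γ) (x : Mt), π (σ • x) = π x)
    (htrans : ∀ x y : Mt, π x = π y → ∃ σ : Γ, σ • x = y)
    -- the differentials of the deck transformations, compatible with transport: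
    (D : Γ → Mt → (Vt ≃ₗ[ℝ] Vt))
    (hD : ∀ (σ : Γ) (x y : Mt) (γ : Path x y) (v : Vt),
      D σ y (St.P γ v) = St.P (γ.map (hcont σ)) (D σ x v))
    (pt : Mt) :
    -- `ιIm` is the image of `Hol_{pt}(M̃)` in `Hol_p(M)`:
    ∀ ιIm : Set (V ≃ₗ[ℝ] V),
      ιIm = {g | ∃ γ : Path pt pt, g = S.P (γ.map hπ)} →
      -- Φ is well defined: two loops at p whose lifts end at σ⁻¹ • pt give the same coset
      ((∀ (σ : Γ) (γ δ : Path pt (σ⁻¹ • pt)),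
          S.P (δ.map hπ) * (S.P (γ.map hπ))⁻¹ ∈ ιIm) ∧
      -- Φ is a group homomorphism: Φ(σ₁)·Φ(σ₂) = Φ(σ₁σ₂)
      (∀ (σ₁ σ₂ : Γ) (γ₁ : Path pt (σ₁⁻¹ • pt)) (γ₂ : Path pt (σ₂⁻¹ • pt))
          (γ : Path pt ((σ₁ * σ₂)⁻¹ • pt)),
          S.P (γ.map hπ) * ((S.P (γ₂.map hπ)).trans (S.P (γ₁.map hπ)))⁻¹ ∈ ιIm) ∧
      -- Φ is surjective: every loop at p is a representative of some Φ(σ)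
      (∀ δ : Path (π pt) (π pt), ∃ (σ : Γ) (γ : Path pt (σ⁻¹ • pt)),
          ∀ t : unitInterval, π (γ t) = δ t)) :=
  holonomy_covering_deck_surjective_general Mt M V S π hπ hcov Γ hcont hfib htrans pt
end

section
/- Let M₁, M₂ be connected smooth manifolds and Γ ⊆ Diff(M₁) × Diff(M₂) a group of diffeomorphisms of M₁ × M₂ of quotient type. Then Γ acts properly discontinuously on M₁ × M₂. -/
/-!
STATEMENT 9: If `Γ ⊆ Diff(M₁) × Diff(M₂)` is a group of diffeomorphisms of `M₁ × M₂`
of quotient type, then `Γ` acts properly discontinuously on `M₁ × M₂`.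

Diffeomorphisms are modeled as bijections (`Equiv`); the conditions (PD1), (PD2) and the
definition of "quotient type" are purely topological and stated for arbitrary sets of
bijections of a topological space.
-/

open Set

/-- Condition (PD1): every point has a neighborhood `U` with `γ(U) ∩ U = ∅` for all
`γ ≠ 1` in `S`. -/
def PD1 {X : Type} [TopologicalSpace X] (S : Set (X ≃ X)) : Prop :=
  ∀ p : X, ∃ U : Set X, IsOpen U ∧ p ∈ U ∧
    ∀ γ ∈ S, γ ≠ Equiv.refl X → Disjoint (⇑γ '' U) U

/-- Condition (PD2): any two points not in the same `S`-orbit have neighborhoods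
`U_p, U_q` with `γ(U_p) ∩ U_q = ∅` for all `γ ∈ S`. -/
def PD2 {X : Type} [TopologicalSpace X] (S : Set (X ≃ X)) : Prop :=
  ∀ p q : X, (¬ ∃ γ ∈ S, γ p = q) →
    ∃ U V : Set X, IsOpen U ∧ IsOpen V ∧ p ∈ U ∧ q ∈ V ∧
      ∀ γ ∈ S, Disjoint (⇑γ '' U) V

/-- A set of bijections is properly discontinuous if it satisfies (PD1) and (PD2). -/
def ProperlyDiscontinuousSet {X : Type} [TopologicalSpace X] (S : Set (X ≃ X)) : Prop :=
  PD1 S ∧ PD2 S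

variable {M₁ M₂ : Type} [TopologicalSpace M₁] [TopologicalSpace M₂]

/-- The `σ`-section `Γ_σ = {γ₁ ∈ Γ₁ : (γ₁, σ) ∈ Γ}`. -/
def sect (Γ : Subgroup ((M₁ ≃ M₁) × (M₂ ≃ M₂))) (σ : M₂ ≃ M₂) : Set (M₁ ≃ M₁) :=
  {γ₁ | (γ₁, σ) ∈ Γ}

/-- `Γ ⊆ Diff(M₁) × Diff(M₂)` is of quotient type (for this ordering of the factors):
`Γ₂` is properly discontinuous, `Γ_{Id}` satisfies (PD1), and `Γ_σ` satisfies (PD2)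
for all `σ ∈ Γ₂`. -/
def QuotientTypeAux (Γ : Subgroup ((M₁ ≃ M₁) × (M₂ ≃ M₂))) : Prop :=
  ProperlyDiscontinuousSet (Prod.snd '' (Γ : Set ((M₁ ≃ M₁) × (M₂ ≃ M₂)))) ∧
  PD1 (sect Γ (Equiv.refl M₂)) ∧
  ∀ σ ∈ Prod.snd '' (Γ : Set ((M₁ ≃ M₁) × (M₂ ≃ M₂))), PD2 (sect Γ σ)

/-- The swapped group, exchanging the roles of `M₁` and `M₂`. -/
def swapGroup (Γ : Subgroup ((M₁ ≃ M₁) × (M₂ ≃ M₂))) :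
    Subgroup ((M₂ ≃ M₂) × (M₁ ≃ M₁)) :=
  Γ.map (MulEquiv.prodComm.toMonoidHom)

/-- `Γ` is of quotient type (possibly after exchanging the roles of `M₁` and `M₂`). -/
def QuotientType (Γ : Subgroup ((M₁ ≃ M₁) × (M₂ ≃ M₂))) : Prop :=
  QuotientTypeAux Γ ∨ QuotientTypeAux (swapGroup Γ)


section Aux

variable {X Y : Type} [TopologicalSpace X] [TopologicalSpace Y]

/-- Glue a first-coordinate disjointness to the product. -/
lemma disjoint_prod_fst {A U : Set X} {V W : Set Y} (f : X ≃ X) (g : Y ≃ Y)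
    (h : Disjoint (⇑f '' A) U) :
    Disjoint (⇑(f.prodCongr g) '' (A ×ˢ V)) (U ×ˢ W) := by
  rw [Set.disjoint_left]
  rintro ⟨x, y⟩ ⟨⟨a, b⟩, ⟨ha, hb⟩, heq⟩ ⟨hx, hy⟩
  simp only [Equiv.prodCongr_apply, Prod.map, Prod.mk.injEq] at heq
  exact Set.disjoint_left.1 h ⟨a, ha, heq.1⟩ hx

/-- Glue a second-coordinate disjointness to the product. -/
lemma disjoint_prod_snd {A U : Set X} {V W : Set Y} (f : X ≃ X) (g : Y ≃ Y)
    (h : Disjoint (⇑g '' V) W) :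
    Disjoint (⇑(f.prodCongr g) '' (A ×ˢ V)) (U ×ˢ W) := by
  rw [Set.disjoint_left]
  rintro ⟨x, y⟩ ⟨⟨a, b⟩, ⟨ha, hb⟩, heq⟩ ⟨hx, hy⟩
  simp only [Equiv.prodCongr_apply, Prod.map, Prod.mk.injEq] at heq
  exact Set.disjoint_left.1 h ⟨b, hb, heq.2⟩ hy

/-- The main result, for a group of quotient type (with the given ordering). -/
lemma quotientTypeAux_main (Γ : Subgroup ((X ≃ X) × (Y ≃ Y)))
    (hcont : ∀ γ ∈ Γ, Continuous ⇑γ.1 ∧ Continuous ⇑γ.1.symm ∧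
      Continuous ⇑γ.2 ∧ Continuous ⇑γ.2.symm)
    (hq : QuotientTypeAux Γ) :
    ProperlyDiscontinuousSet
      ((fun γ : (X ≃ X) × (Y ≃ Y) => γ.1.prodCongr γ.2) ''
        (Γ : Set ((X ≃ X) × (Y ≃ Y)))) := by
  obtain ⟨⟨h2pd1, h2pd2⟩, hIdpd1, hsect⟩ := hq
  constructor
  · -- PD1
    rintro ⟨p₁, p₂⟩
    obtain ⟨V, hVo, hpV, hV⟩ := h2pd1 p₂
    obtain ⟨U, hUo, hpU, hU⟩ := hIdpd1 p₁
    refine ⟨U ×ˢ V, hUo.prod hVo, ⟨hpU, hpV⟩, ?_⟩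
    rintro γ ⟨g, hg, rfl⟩ hne
    by_cases hg2 : g.2 = Equiv.refl Y
    · have hmem : g.1 ∈ sect Γ (Equiv.refl Y) := by
        show (g.1, Equiv.refl Y) ∈ Γ
        rw [← hg2]
        exact hg
      have hne1 : g.1 ≠ Equiv.refl X := by
        intro h1
        apply hne
        show g.1.prodCongr g.2 = _
        rw [h1, hg2]
        ext ⟨a, b⟩ <;> rfl
      exact disjoint_prod_fst _ _ (hU g.1 hmem hne1)
    · have hmem : g.2 ∈ Prod.snd '' (Γ : Set ((X ≃ X) × (Y ≃ Y))) := ⟨g, hg, rfl⟩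
      exact disjoint_prod_snd _ _ (hV g.2 hmem hg2)
  · -- PD2
    rintro ⟨p₁, p₂⟩ ⟨q₁, q₂⟩ hnot
    by_cases hσ : ∃ σ ∈ Prod.snd '' (Γ : Set ((X ≃ X) × (Y ≃ Y))), σ p₂ = q₂
    · obtain ⟨σ₀, hσ₀, hσ₀eq⟩ := hσ
      obtain ⟨V, hVo, hpV, hV⟩ := h2pd1 p₂
      have hnot1 : ¬ ∃ γ₁ ∈ sect Γ σ₀, γ₁ p₁ = q₁ := by
        rintro ⟨γ₁, hγ₁, hγ₁eq⟩
        exact hnot ⟨γ₁.prodCongr σ₀, ⟨(γ₁, σ₀), hγ₁, rfl⟩, by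
          simp [hγ₁eq, hσ₀eq]⟩
      obtain ⟨U₁, U₂, hU₁o, hU₂o, hpU₁, hqU₂, hU⟩ := hsect σ₀ hσ₀ p₁ q₁ hnot1
      obtain ⟨g₀, hg₀, hg₀2⟩ := hσ₀
      have hσ₀V : IsOpen (⇑σ₀ '' V) := by
        rw [Equiv.image_eq_preimage_symm]
        exact hVo.preimage (by rw [← hg₀2]; exact (hcont g₀ hg₀).2.2.2)
      refine ⟨U₁ ×ˢ V, U₂ ×ˢ (⇑σ₀ '' V), hU₁o.prod hVo, hU₂o.prod hσ₀V,
        ⟨hpU₁, hpV⟩, ⟨hqU₂, ⟨p₂, hpV, hσ₀eq⟩⟩, ?_⟩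
      rintro γ ⟨g, hg, rfl⟩
      by_cases hg2 : g.2 = σ₀
      · have hmem : g.1 ∈ sect Γ σ₀ := by
          show (g.1, σ₀) ∈ Γ
          rw [← hg2]
          exact hg
        exact disjoint_prod_fst _ _ (hU g.1 hmem)
      · have hτmem : σ₀⁻¹ * g.2 ∈ Prod.snd '' (Γ : Set ((X ≃ X) × (Y ≃ Y))) := by
          refine ⟨g₀⁻¹ * g, Γ.mul_mem (Γ.inv_mem hg₀) hg, ?_⟩
          simp [hg₀2]
        have hτne : σ₀⁻¹ * g.2 ≠ Equiv.refl Y := by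
          intro h
          apply hg2
          have : σ₀ * (σ₀⁻¹ * g.2) = σ₀ * 1 := by
            rw [h]; rfl
          rw [← mul_assoc, mul_inv_cancel, one_mul, mul_one] at this
          exact this
        have hdisj := hV _ hτmem hτne
        refine disjoint_prod_snd _ _ ?_
        rw [Set.disjoint_left]
        rintro x ⟨v, hv, rfl⟩ ⟨w, hw, hw2⟩
        refine Set.disjoint_left.1 hdisj ⟨v, hv, ?_⟩ hw
        show σ₀⁻¹ (g.2 v) = w
        rw [← hw2]
        simp [Equiv.Perm.inv_def]
    · obtain ⟨V₁, V₂, hV₁o, hV₂o, hpV₁, hqV₂, hVd⟩ := h2pd2 p₂ q₂ hσ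
      refine ⟨Set.univ ×ˢ V₁, Set.univ ×ˢ V₂, isOpen_univ.prod hV₁o,
        isOpen_univ.prod hV₂o, ⟨trivial, hpV₁⟩, ⟨trivial, hqV₂⟩, ?_⟩
      rintro γ ⟨g, hg, rfl⟩
      exact disjoint_prod_snd _ _ (hVd g.2 ⟨g, hg, rfl⟩)

/-- Transport of proper discontinuity along a homeomorphism. -/
lemma pd_conj (e : X ≃ₜ Y) (S : Set (Y ≃ Y)) (h : ProperlyDiscontinuousSet S) :
    ProperlyDiscontinuousSet
      ((fun σ : Y ≃ Y => e.toEquiv.trans (σ.trans e.symm.toEquiv)) '' S) := by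
  constructor
  · intro p
    obtain ⟨U, hUo, hpU, hU⟩ := h.1 (e p)
    refine ⟨⇑e ⁻¹' U, hUo.preimage e.continuous, hpU, ?_⟩
    rintro γ ⟨σ, hσ, rfl⟩ hne
    have hσne : σ ≠ Equiv.refl Y := by
      rintro rfl
      exact hne (by ext x; simp)
    rw [Set.disjoint_left]
    rintro x ⟨a, ha, rfl⟩ hx
    have hx' : σ (e a) ∈ U := by simpa using hx
    exact Set.disjoint_left.1 (hU σ hσ hσne) ⟨e a, ha, rfl⟩ hx'
  · intro p q hnot
    have hnot' : ¬ ∃ σ ∈ S, σ (e p) = e q := by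
      rintro ⟨σ, hσ, hσeq⟩
      exact hnot ⟨_, ⟨σ, hσ, rfl⟩, by simp [hσeq]⟩
    obtain ⟨U, V, hUo, hVo, hpU, hqV, hd⟩ := h.2 (e p) (e q) hnot'
    refine ⟨⇑e ⁻¹' U, ⇑e ⁻¹' V, hUo.preimage e.continuous, hVo.preimage e.continuous,
      hpU, hqV, ?_⟩
    rintro γ ⟨σ, hσ, rfl⟩
    rw [Set.disjoint_left]
    rintro x ⟨a, ha, rfl⟩ hx
    have hx' : σ (e a) ∈ V := by simpa using hx
    exact Set.disjoint_left.1 (hd σ hσ) ⟨e a, ha, rfl⟩ hx'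

end Aux

/-- A group of quotient type acts properly discontinuously on
`M₁ × M₂`. -/
theorem quotientType_properlyDiscontinuous
    (Γ : Subgroup ((M₁ ≃ M₁) × (M₂ ≃ M₂)))
    -- each element of `Γ` is a pair of homeomorphisms (diffeomorphisms):
    (hcont : ∀ γ ∈ Γ, Continuous ⇑γ.1 ∧ Continuous ⇑γ.1.symm ∧
      Continuous ⇑γ.2 ∧ Continuous ⇑γ.2.symm)
    (hq : QuotientType Γ) :
    ProperlyDiscontinuousSet
      ((fun γ : (M₁ ≃ M₁) × (M₂ ≃ M₂) => γ.1.prodCongr γ.2) ''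
        (Γ : Set ((M₁ ≃ M₁) × (M₂ ≃ M₂)))) := by
  rcases hq with h | h
  · exact quotientTypeAux_main Γ hcont h
  · have hc : ∀ γ ∈ swapGroup Γ, Continuous ⇑γ.1 ∧ Continuous ⇑γ.1.symm ∧
        Continuous ⇑γ.2 ∧ Continuous ⇑γ.2.symm := by
      rintro γ ⟨g, hg, rfl⟩
      obtain ⟨a, b, c, d⟩ := hcont g hg
      exact ⟨c, d, a, b⟩
    have H := pd_conj (Homeomorph.prodComm M₁ M₂) _
      (quotientTypeAux_main (swapGroup Γ) hc h)
    have hset : ((fun σ : (M₂ × M₁) ≃ (M₂ × M₁) =>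
          (Homeomorph.prodComm M₁ M₂).toEquiv.trans
            (σ.trans (Homeomorph.prodComm M₁ M₂).symm.toEquiv)) ''
          ((fun γ : (M₂ ≃ M₂) × (M₁ ≃ M₁) => γ.1.prodCongr γ.2) ''
            ((swapGroup Γ) : Set ((M₂ ≃ M₂) × (M₁ ≃ M₁))))) =
        ((fun γ : (M₁ ≃ M₁) × (M₂ ≃ M₂) => γ.1.prodCongr γ.2) ''
          (Γ : Set ((M₁ ≃ M₁) × (M₂ ≃ M₂)))) := by
      rw [Set.image_image, swapGroup, Subgroup.coe_map, Set.image_image]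
      apply Set.image_congr
      intro g _
      ext ⟨a, b⟩ <;> rfl
    rwa [hset] at H
end

section
/- Consider the pp-wave metric g^f = 2 dv du + 2f(u,x) du² + Σ_{i=1}^n (dx^i)² on an open subset of R^{n+2} with ∂_v f = 0. Along a curve δ(t) = (v(t), u(t), γ(t)), a vector field of the form φ(t)·∂_v + X(t) with X tangent to the x-factor is parallel if and only if X is parallel along γ for the flat metric (i.e., has constant components) and φ satisfies the linear ODE φ' + u'·df(X) ∘ δ = 0. In particular, every parallel transport along any curve is block upper-triangular of the form [[1, *, *],[0, I_n, *],[0,0,1]] with respect to the frame (∂_v, ∂_1,…,∂_n, ∂_u − f ∂_v). -/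
/-!
STATEMENT 11: For the pp-wave metric `g^f = 2 dv du + 2 f(u,x) du² + Σ (dxⁱ)²` with
`∂_v f = 0`, along a curve `δ(t) = (v(t), u(t), γ(t))` a vector field `φ·∂_v + X` (with
`X` tangent to the `x`-factor) is parallel iff `X` has constant components and
`φ' + u'·df(X)∘δ = 0`.  In particular every parallel field transforms block
upper-triangularly with respect to the frame `(∂_v, ∂_i, ∂_u − f ∂_v)`.

The covariant derivative along a curve is defined from the Christoffel data of the
pp-wave metric.
-/

/-- Coordinates `(v, u, x) ∈ ℝ × ℝ × ℝⁿ`. -/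
abbrev Epp (n : ℕ) := ℝ × ℝ × (Fin n → ℝ)

/-- `∂f/∂xⁱ` at `q = (u,x)`. -/
noncomputable def pdx (n : ℕ) (f : ℝ × (Fin n → ℝ) → ℝ) (i : Fin n)
    (q : ℝ × (Fin n → ℝ)) : ℝ :=
  fderiv ℝ f q (0, Pi.single i 1)

/-- `∂f/∂u` at `q = (u,x)`. -/
noncomputable def pdu (n : ℕ) (f : ℝ × (Fin n → ℝ) → ℝ) (q : ℝ × (Fin n → ℝ)) : ℝ :=
  fderiv ℝ f q (1, 0)

/-- The covariant derivative, with respect to the Levi-Civita connection of the pp-wave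
metric `2dvdu + 2f du² + Σ(dxⁱ)²`, of a vector field `Y(t) = (φ(t), ψ(t), X(t))` along
the curve `δ(t) = (v(t), u(t), γ(t))`, computed from the Christoffel data
`∇_X Y = 0`, `∇_{∂_u} X = ∇_X ∂_u = df(X) ∂_v`, `∇_{∂_u}∂_u = ∂_u f ∂_v − grad f`,
`∇ ∂_v = 0`. -/
noncomputable def covD (n : ℕ) (f : ℝ × (Fin n → ℝ) → ℝ)
    (δ : ℝ → Epp n) (Y : ℝ → Epp n) (t : ℝ) : Epp n :=
  let u : ℝ → ℝ := fun s => (δ s).2.1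
  let γ : ℝ → (Fin n → ℝ) := fun s => (δ s).2.2
  let q : ℝ × (Fin n → ℝ) := ((δ t).2.1, (δ t).2.2)
  ( deriv (fun s => (Y s).1) t
      + (Y t).2.1 * (deriv u t * pdu n f q + ∑ j, deriv (fun s => γ s j) t * pdx n f j q)
      + deriv u t * ∑ i, (Y t).2.2 i * pdx n f i q,
    deriv (fun s => (Y s).2.1) t,
    fun i => deriv (fun s => (Y s).2.2 i) t - (Y t).2.1 * deriv u t * pdx n f i q )

/-- `Y` is parallel along `δ`. -/
def IsParallelAlong (n : ℕ) (f : ℝ × (Fin n → ℝ) → ℝ)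
    (δ : ℝ → Epp n) (Y : ℝ → Epp n) : Prop :=
  ∀ t, covD n f δ Y t = 0

/-- Characterization of parallel fields of the form `φ ∂_v + X` along a
curve in a pp-wave, and block-triangularity of parallel transport with respect to the
filtration `ℝ∂_v ⊆ (ℝ∂_v ⊕ ℝⁿ) ⊆ TM`. -/
theorem ppwave_parallel_transport (n : ℕ) (f : ℝ × (Fin n → ℝ) → ℝ)
    (hf : ContDiff ℝ (⊤ : ℕ∞) f) :
    -- a field `φ·∂_v + X` is parallel iff `X` is constant and `φ' + u'·df(X)∘δ = 0`
    (∀ (v u : ℝ → ℝ) (γ : ℝ → (Fin n → ℝ)) (φ : ℝ → ℝ) (X : ℝ → (Fin n → ℝ)),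
      Differentiable ℝ v → Differentiable ℝ u →
      (∀ i, Differentiable ℝ fun t => γ t i) →
      Differentiable ℝ φ → (∀ i, Differentiable ℝ fun t => X t i) →
      (IsParallelAlong n f (fun t => (v t, u t, γ t)) (fun t => (φ t, 0, X t)) ↔
        ((∃ X₀ : Fin n → ℝ, ∀ t, X t = X₀) ∧
          ∀ t, deriv φ t + deriv u t * ∑ i, X t i * pdx n f i (u t, γ t) = 0))) ∧
    -- parallel transport is block upper-triangular `[[1,*,*],[0,1ₙ,*],[0,0,1]]` in the
    -- frame `(∂_v, ∂_i, ∂_u − f∂_v)`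
    (∀ (v u : ℝ → ℝ) (γ : ℝ → (Fin n → ℝ)) (Y : ℝ → Epp n),
      Differentiable ℝ v → Differentiable ℝ u →
      (∀ i, Differentiable ℝ fun t => γ t i) →
      Differentiable ℝ (fun t => (Y t).1) → Differentiable ℝ (fun t => (Y t).2.1) →
      (∀ i, Differentiable ℝ fun t => (Y t).2.2 i) →
      IsParallelAlong n f (fun t => (v t, u t, γ t)) Y →
      ((∀ s t : ℝ, (Y s).2.1 = (Y t).2.1) ∧
       ((∀ t, (Y t).2.1 = 0) → ∀ s t : ℝ, (Y s).2.2 = (Y t).2.2) ∧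
       ((∀ t, (Y t).2.1 = 0 ∧ (Y t).2.2 = 0) → ∀ s t : ℝ, (Y s).1 = (Y t).1))) := by
  constructor
  · intro v u γ φ X hv hu hγ hφ hX
    constructor
    · intro hpar
      have h3 : ∀ t i, deriv (fun s => X s i) t = 0 := by
        intro t i
        have := congrArg (fun p : Epp n => p.2.2 i) (hpar t)
        simpa [covD] using this
      have hconst : ∀ i, ∀ s t : ℝ, X s i = X t i := by
        intro i s t
        exact is_const_of_deriv_eq_zero (hX i) (fun x => h3 x i) s t
      refine ⟨⟨X 0, fun t => funext fun i => hconst i t 0⟩, ?_⟩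
      intro t
      have h1 := congrArg (fun p : Epp n => p.1) (hpar t)
      simpa [covD] using h1
    · rintro ⟨⟨X₀, hX₀⟩, hode⟩ t
      have hXd : ∀ i, deriv (fun s => X s i) t = 0 := by
        intro i
        have : (fun s => X s i) = fun _ => X₀ i := funext fun s => by rw [hX₀ s]
        rw [this, deriv_const]
      have h1 := hode t
      simp only [covD, Prod.ext_iff]
      refine ⟨?_, ?_, ?_⟩
      · simpa using h1
      · simp
      · funext i; simp [hXd i]
  · intro v u γ Y hv hu hγ hY1 hY2 hY3 hpar
    have h2 : ∀ t, deriv (fun s => (Y s).2.1) t = 0 := by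
      intro t
      have := congrArg (fun p : Epp n => p.2.1) (hpar t)
      simpa [covD] using this
    have hc2 : ∀ s t : ℝ, (Y s).2.1 = (Y t).2.1 :=
      fun s t => is_const_of_deriv_eq_zero hY2 h2 s t
    refine ⟨hc2, ?_, ?_⟩
    · intro h0 s t
      have h3 : ∀ t i, deriv (fun s => (Y s).2.2 i) t = 0 := by
        intro t i
        have := congrArg (fun p : Epp n => p.2.2 i) (hpar t)
        simpa [covD, h0 t] using this
      exact funext fun i => is_const_of_deriv_eq_zero (hY3 i) (fun x => h3 x i) s t
    · intro h0 s t
      have h1 : ∀ t, deriv (fun s => (Y s).1) t = 0 := by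
        intro t
        have := congrArg (fun p : Epp n => p.1) (hpar t)
        simpa [covD, (h0 t).1, (h0 t).2] using this
      exact is_const_of_deriv_eq_zero hY1 h1 s t
end

section
/- Let (M,g) be a Lorentzian manifold with a parallel distribution L of null lines, let L^⊥ be its orthogonal distribution and S = L^⊥/L the screen bundle with induced connection ∇^S. Then for every loop γ at p and every e ∈ L_p^⊥, the parallel transport satisfies [P^g_γ(e)] = P^S_γ([e]), where [·]: L^⊥ → S is the projection. Consequently, Hol_p(S, ∇^S) equals the image of Hol_p(M,g) under the quotient representation on L_p^⊥/L_p. -/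
/-!
The `∇^g`-derivative of the lift `U` is a multiple `f • V₀` of a parallel section of the null
line, so subtracting `F • V₀` with `F' = f` leaves a `∇^g`-parallel field starting at `e`. By
uniqueness of parallel fields it is `W`, hence `U - W = F • V₀` is a section of `L`.
-/

lemma covDeriv_add_neg_smul_eq_zero {V : Type*} [AddCommGroup V] [Module ℝ V]
    (Dg : (ℝ → V) → (ℝ → V))
    (hadd : ∀ U W : ℝ → V, Dg (U + W) = Dg U + Dg W)
    (hleib : ∀ (f : ℝ → ℝ) (U : ℝ → V), Differentiable ℝ f →
      Dg (fun t => f t • U t) = fun t => deriv f t • U t + f t • Dg U t)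
    {V₀ U : ℝ → V} {f F : ℝ → ℝ} (hV₀ : ∀ t, Dg V₀ t = 0)
    (hF : ∀ t, HasDerivAt F (f t) t) (hU : ∀ t, Dg U t = f t • V₀ t) (t : ℝ) :
    Dg (U + fun t => (-F t) • V₀ t) t = 0 := by
  have hnegF : Differentiable ℝ (fun t => -F t) := fun t => (hF t).differentiableAt.neg
  rw [hadd, hleib _ _ hnegF, Pi.add_apply, hU, hV₀, smul_zero, add_zero, (hF t).fun_neg.deriv,
    neg_smul, add_neg_cancel]

theorem screen_transport_eq_quotient_of_transport_general
    (V : Type) [AddCommGroup V] [Module ℝ V]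
    (L : ℝ → Submodule ℝ V)
    -- the covariant derivative of fields along the curve γ: additivity and Leibniz rule
    (Dg : (ℝ → V) → (ℝ → V))
    (hadd : ∀ U W : ℝ → V, Dg (U + W) = Dg U + Dg W)
    (hleib : ∀ (f : ℝ → ℝ) (U : ℝ → V), Differentiable ℝ f →
      Dg (fun t => f t • U t) = fun t => deriv f t • U t + f t • Dg U t)
    -- uniqueness of parallel fields along the curve:
    (huniq : ∀ U W : ℝ → V, (∀ t, Dg U t = 0) → (∀ t, Dg W t = 0) → U 0 = W 0 → U = W)
    -- `V₀` is a parallel section spanning the null line `L` along the curve: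
    (V₀ : ℝ → V) (hV₀par : ∀ t, Dg V₀ t = 0) (hV₀span : ∀ t, L t = Submodule.span ℝ {V₀ t})
    (e : V)
    -- `U` is a section of `L^⊥` along the curve which is `∇^S`-parallel, `U 0 = e`:
    (U : ℝ → V) (hU0 : U 0 = e)
    (hreg : ∃ f : ℝ → ℝ, Continuous f ∧ ∀ t, Dg U t = f t • V₀ t)
    -- `W` is the `∇^g`-parallel transport of `e` along the curve:
    (W : ℝ → V) (hW : ∀ t, Dg W t = 0) (hW0 : W 0 = e) :
    -- `[P^g_γ(e)] = P^S_γ([e])` in the screen bundle `L^⊥/L`: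
    ∀ t, U t - W t ∈ L t := by
  obtain ⟨f, hf, hfU⟩ := hreg
  set F : ℝ → ℝ := fun t => ∫ x in (0 : ℝ)..t, f x
  have hF : ∀ t, HasDerivAt F (f t) t := fun t => (hf.integral_hasStrictDerivAt 0 t).hasDerivAt
  have hUW : (U + fun t => (-F t) • V₀ t) = W :=
    huniq _ _ (covDeriv_add_neg_smul_eq_zero Dg hadd hleib hV₀par hF hfU) hW
      (by simp [F, hU0, hW0])
  intro t
  have hdiff : U t - W t = F t • V₀ t := by
    rw [← hUW, Pi.add_apply, neg_smul, sub_add_cancel_left, neg_neg]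
  rw [hdiff, hV₀span]
  exact Submodule.smul_mem _ _ (Submodule.mem_span_singleton_self _)

theorem screen_transport_eq_quotient_of_transport
    (V : Type) [AddCommGroup V] [Module ℝ V]
    (L Lp : ℝ → Submodule ℝ V) (hLLp : ∀ t, L t ≤ Lp t)
    -- the covariant derivative of fields along the curve γ: additivity and Leibniz rule
    (Dg : (ℝ → V) → (ℝ → V))
    (hadd : ∀ U W : ℝ → V, Dg (U + W) = Dg U + Dg W)
    (hleib : ∀ (f : ℝ → ℝ) (U : ℝ → V), Differentiable ℝ f →
      Dg (fun t => f t • U t) = fun t => deriv f t • U t + f t • Dg U t)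
    -- uniqueness of parallel fields along the curve:
    (huniq : ∀ U W : ℝ → V, (∀ t, Dg U t = 0) → (∀ t, Dg W t = 0) → U 0 = W 0 → U = W)
    -- `V₀` is a parallel section spanning the null line `L` along the curve:
    (V₀ : ℝ → V) (hV₀par : ∀ t, Dg V₀ t = 0) (hV₀span : ∀ t, L t = Submodule.span ℝ {V₀ t})
    -- `e ∈ L^⊥` at the base point:
    (e : V) (he : e ∈ Lp 0)
    -- `U` is a section of `L^⊥` along the curve which is `∇^S`-parallel, `U 0 = e`:
    (U : ℝ → V) (hU : ∀ t, U t ∈ Lp t) (hU0 : U 0 = e)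
    (hUscreen : ∀ t, Dg U t ∈ L t)
    (hreg : ∃ f : ℝ → ℝ, Continuous f ∧ ∀ t, Dg U t = f t • V₀ t)
    -- `W` is the `∇^g`-parallel transport of `e` along the curve:
    (W : ℝ → V) (hW : ∀ t, Dg W t = 0) (hW0 : W 0 = e) :
    -- `[P^g_γ(e)] = P^S_γ([e])` in the screen bundle `L^⊥/L`:
    ∀ t, U t - W t ∈ L t :=
  screen_transport_eq_quotient_of_transport_general V L Dg hadd hleib huniq V₀ hV₀par hV₀span e U
    hU0 hreg W hW hW0
end
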